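/- If G is a finite subgroup of the unit quaternions that is closed under negation and conjugation, then G, viewed as a set of vectors in the 4-dimensional Euclidean space ℍ, is a root system: it meets each line ℝg in exactly {g, -g}, and is invariant under the reflection in the hyperplane orthogonal to any of its elements. -/

import Mathlib

/-! For a unit quaternion `g` one has `2⟨g,h⟩ = g h̄ + h ḡ` and `ḡ g = 1`, so the reflection
`r_g(h) = h - 2⟨g,h⟩g` equals `-(g h̄ g)`. When `h` is a unit quaternion too, `h̄ = h⁻¹`, so `r_g(h)`
is a product of elements of `G`. -/

/-- The real inner product ⟨p,q⟩ = ½(pq̄ + qp̄) on the quaternions. -/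
noncomputable def quatInner (p q : Quaternion ℝ) : ℝ :=
  ((p * star q + q * star p) / 2).re

lemma eq_one_or_eq_neg_one_of_norm_smul {E : Type*} [NormedAddCommGroup E] [NormedSpace ℝ E]
    {g : E} {t : ℝ} (hg : ‖g‖ = 1) (ht : ‖t • g‖ = 1) : t = 1 ∨ t = -1 := by
  rw [norm_smul, hg, mul_one, Real.norm_eq_abs] at ht
  exact abs_eq zero_le_one |>.mp ht

namespace Quaternion

lemma star_eq_inv_of_norm_eq_one {q : ℍ[ℝ]} (hq : ‖q‖ = 1) : star q = q⁻¹ := by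
  rw [inv_def, normSq_eq_norm_mul_self, hq, mul_one, inv_one, one_smul]

lemma mul_star_add_mul_star (p q : ℍ[ℝ]) :
    p * star q + q * star p = ((2 * (p * star q).re : ℝ) : ℍ[ℝ]) := by
  rw [← self_add_star', star_mul, star_star]

lemma quatInner_eq_re_mul_star (p q : ℍ[ℝ]) : quatInner p q = (p * star q).re := by
  rw [quatInner, mul_star_add_mul_star, show (2 : ℍ[ℝ]) = ((2 : ℝ) : ℍ[ℝ]) by norm_cast, ← coe_div,
    re_coe]
  ring

lemma coe_two_mul_quatInner (p q : ℍ[ℝ]) :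
    ((2 * quatInner p q : ℝ) : ℍ[ℝ]) = p * star q + q * star p := by
  rw [mul_star_add_mul_star, quatInner_eq_re_mul_star]

lemma two_mul_quatInner_smul (p q : ℍ[ℝ]) :
    (2 * quatInner p q) • p = p * star q * p + normSq p • q := by
  rw [← coe_mul_eq_smul, coe_two_mul_quatInner, add_mul, mul_assoc q, star_mul_self,
    mul_coe_eq_smul]

lemma sub_two_mul_quatInner_smul {p : ℍ[ℝ]} (hp : ‖p‖ = 1) (q : ℍ[ℝ]) :
    q - (2 * quatInner p q) • p = -(p * star q * p) := by
  rw [two_mul_quatInner_smul, normSq_eq_norm_mul_self, hp, mul_one, one_smul]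
  abel

end Quaternion

theorem stmt_7_general (G : Set (Quaternion ℝ))
    (hnorm : ∀ g ∈ G, ‖g‖ = 1)
    (hmul : ∀ g ∈ G, ∀ h ∈ G, g * h ∈ G)
    (hinv : ∀ g ∈ G, g⁻¹ ∈ G)
    (hneg : (-1 : Quaternion ℝ) ∈ G) :
    -- (1) G meets each line ℝg, g ∈ G, in exactly {g, -g}
    (∀ g ∈ G, {x : Quaternion ℝ | ∃ t : ℝ, x = t • g} ∩ G = {g, -g}) ∧
    -- (2) G is invariant under the reflection in (the hyperplane orthogonal to) any of its elements
    (∀ g ∈ G, ∀ h ∈ G, h - (2 * quatInner g h) • g ∈ G) := by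
  have neg_mem : ∀ g ∈ G, -g ∈ G := fun g hg => by
    simpa using hmul _ hneg _ hg
  refine ⟨fun g hg => ?_, fun g hg h hh => ?_⟩
  · ext x
    simp only [Set.mem_inter_iff, Set.mem_ofPred_eq, Set.mem_insert_iff, Set.mem_singleton_iff]
    constructor
    · rintro ⟨⟨t, rfl⟩, hx⟩
      rcases eq_one_or_eq_neg_one_of_norm_smul (hnorm g hg) (hnorm _ hx) with rfl | rfl <;> simp
    · rintro (rfl | rfl)
      · exact ⟨⟨1, (one_smul _ _).symm⟩, hg⟩
      · exact ⟨⟨-1, (neg_one_smul _ _).symm⟩, neg_mem g hg⟩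
  · rw [Quaternion.sub_two_mul_quatInner_smul (hnorm g hg),
      Quaternion.star_eq_inv_of_norm_eq_one (hnorm h hh)]
    exact neg_mem _ (hmul _ (hmul _ hg _ (hinv _ hh)) _ hg)

theorem stmt_7 (G : Set (Quaternion ℝ)) (hfin : G.Finite)
    (hnorm : ∀ g ∈ G, ‖g‖ = 1)
    (hone : (1 : Quaternion ℝ) ∈ G)
    (hmul : ∀ g ∈ G, ∀ h ∈ G, g * h ∈ G)
    (hinv : ∀ g ∈ G, g⁻¹ ∈ G)
    (hneg : (-1 : Quaternion ℝ) ∈ G) :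
    -- (1) G meets each line ℝg, g ∈ G, in exactly {g, -g}
    (∀ g ∈ G, {x : Quaternion ℝ | ∃ t : ℝ, x = t • g} ∩ G = {g, -g}) ∧
    -- (2) G is invariant under the reflection in (the hyperplane orthogonal to) any of its elements
    (∀ g ∈ G, ∀ h ∈ G, h - (2 * quatInner g h) • g ∈ G) :=
  stmt_7_general G hnorm hmul hinv hneg
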